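/- Let M be a loopless matroid on E, m ≥ 1, and Q = Q_m(M) with tip a. Let S' ⊆ E(Q) with a ∉ S' and |S' ∩ (T_e ∪ {e})| = 1 for every e ∈ p(S'). Then a ∈ cl_Q(S') if and only if there is some e ∈ p(S') with S' ∩ T_e ≠ ∅ such that e is not a coloop of the restriction M|p(S'). -/

import Mathlib

open Set Matroid

namespace ConePaper

variable {α : Type*}

/-- The rank of a set in a matroid: the supremum of sizes of independent subsets. -/
noncomputable def rk (M : Matroid α) (X : Set α) : ℕ :=
  sSup {n : ℕ | ∃ I, M.Indep I ∧ I ⊆ X ∧ I.ncard = n}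

/-- A loopless matroid: every singleton of the ground set is independent. -/
def Loopless (M : Matroid α) : Prop := ∀ e ∈ M.E, M.Indep {e}

/-- A coloop: an element of the ground set lying in every base. -/
def IsColoop (M : Matroid α) (e : α) : Prop := e ∈ M.E ∧ ∀ B, M.IsBase B → e ∈ B

/-- A circuit: a minimal dependent set. -/
def IsCircuit (M : Matroid α) (C : Set α) : Prop :=
  C ⊆ M.E ∧ ¬ M.Indep C ∧ ∀ x ∈ C, M.Indep (C \ {x})

/-- A cyclic flat: a flat whose restriction has no coloops. -/
def CyclicFlat (M : Matroid α) (F : Set α) : Prop :=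
  M.IsFlat F ∧ ∀ e ∈ F, ¬ IsColoop (M ↾ F) e

/-- Deletion of a set from a matroid. -/
def mdel (M : Matroid α) (X : Set α) : Matroid α := M ↾ (M.E \ X)

/-- The cone `q(S) = S ∪ {a} ∪ ⋃_{e ∈ S} T e`. -/
def cone (T : α → Set α) (a : α) (S : Set α) : Set α := S ∪ {a} ∪ ⋃ e ∈ S, T e

/-- The projection `p(S) = (S ∩ E) ∪ {e ∈ E : S ∩ T e ≠ ∅}`. -/
def proj (E : Set α) (T : α → Set α) (S : Set α) : Set α :=
  (S ∩ E) ∪ {e ∈ E | (S ∩ T e).Nonempty}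

/-- `FreeCone M Q T a m` says that `Q` is the free `m`-cone of the loopless
matroid `M`, with extra points `T e` (of size `m`) for `e ∈ M.E` and tip `a`:
its cyclic flats are those of `M` (with the same rank) together with the cones
of nonempty flats of `M` (with rank one greater). -/
structure FreeCone (M Q : Matroid α) (T : α → Set α) (a : α) (m : ℕ) : Prop where
  hm : 1 ≤ m
  hMfin : M.E.Finite
  hloopless : Loopless M
  hTfin : ∀ e ∈ M.E, (T e).Finite
  hTcard : ∀ e ∈ M.E, (T e).ncard = m
  hTdisjE : ∀ e ∈ M.E, Disjoint (T e) M.E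
  hTdisj : ∀ e ∈ M.E, ∀ f ∈ M.E, e ≠ f → Disjoint (T e) (T f)
  ha : a ∉ M.E ∪ ⋃ e ∈ M.E, T e
  hQE : Q.E = M.E ∪ (⋃ e ∈ M.E, T e) ∪ {a}
  hcyclic : ∀ F, CyclicFlat Q F ↔
      (CyclicFlat M F ∨ ∃ F', M.IsFlat F' ∧ F'.Nonempty ∧ F = cone T a F')
  hrank1 : ∀ F, CyclicFlat M F → rk Q F = rk M F
  hrank2 : ∀ F', M.IsFlat F' → F'.Nonempty → rk Q (cone T a F') = rk M F' + 1

/-- A flag of a rank-`k` matroid: a chain of flats, one of each rank `0,…,k`. -/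
def IsFlag (N : Matroid α) (k : ℕ) (X : ℕ → Set α) : Prop :=
  (∀ i ≤ k, N.IsFlat (X i) ∧ rk N (X i) = i) ∧ ∀ i < k, X i ⊂ X (i + 1)

-- helper lemmas

lemma ncard_le_rk {N : Matroid α} {X I : Set α} (hfin : N.E.Finite) (hI : N.Indep I)
    (hIX : I ⊆ X) : I.ncard ≤ rk N X := by
  apply le_csSup
  · refine ⟨N.E.ncard, ?_⟩
    rintro n ⟨J, hJ, _, rfl⟩
    exact Set.ncard_le_ncard hJ.subset_ground hfin
  · exact ⟨I, hI, hIX, rfl⟩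

lemma exists_indep_rk {N : Matroid α} (hfin : N.E.Finite) (X : Set α) :
    ∃ I, N.Indep I ∧ I ⊆ X ∧ I.ncard = rk N X := by
  have hbdd : BddAbove {n : ℕ | ∃ I, N.Indep I ∧ I ⊆ X ∧ I.ncard = n} := by
    refine ⟨N.E.ncard, ?_⟩
    rintro n ⟨J, hJ, _, rfl⟩
    exact Set.ncard_le_ncard hJ.subset_ground hfin
  have h0 : (0 : ℕ) ∈ {n : ℕ | ∃ I, N.Indep I ∧ I ⊆ X ∧ I.ncard = n} :=
    ⟨∅, N.empty_indep, empty_subset X, by simp⟩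
  exact Nat.sSup_mem ⟨0, h0⟩ hbdd

lemma rk_eq_ncard_of_basis {N : Matroid α} {X I : Set α} (hfin : N.E.Finite)
    (hIX : N.IsBasis I X) : rk N X = I.ncard := by
  refine le_antisymm ?_ (ncard_le_rk hfin hIX.indep hIX.subset)
  obtain ⟨J, hJ, hJX, hcard⟩ := exists_indep_rk hfin X
  rw [← hcard]
  obtain ⟨J', hJ', hJJ'⟩ := hJ.subset_isBasis_of_subset hJX hIX.subset_ground
  have h1 : J.ncard ≤ J'.ncard :=
    Set.ncard_le_ncard hJJ' (hfin.subset hJ'.indep.subset_ground)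
  have h2 : J'.encard = I.encard := hJ'.encard_eq_encard hIX
  have h3 : J'.ncard = I.ncard := by rw [Set.ncard_def, h2, ← Set.ncard_def]
  omega

lemma rk_closure_eq {N : Matroid α} {X : Set α} (hfin : N.E.Finite) (hX : X ⊆ N.E) :
    rk N (N.closure X) = rk N X := by
  obtain ⟨I, hI⟩ := N.exists_isBasis X hX
  rw [rk_eq_ncard_of_basis hfin hI.isBasis_closure_right, rk_eq_ncard_of_basis hfin hI]

lemma flat_closure (N : Matroid α) (X : Set α) : N.IsFlat (N.closure X) := by
  refine ⟨fun I Y hI hIY => ?_, N.closure_subset_ground X⟩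
  have h1 : Y ⊆ N.closure I := hIY.subset_closure
  have h2 : N.closure I = N.closure (N.closure X) := hI.closure_eq_closure
  rwa [h2, N.closure_closure] at h1

lemma IsCircuit.nonempty {N : Matroid α} {C : Set α} (hC : IsCircuit N C) : C.Nonempty := by
  rw [nonempty_iff_ne_empty]
  rintro rfl
  exact hC.2.1 N.empty_indep

lemma IsCircuit.mem_closure_diff {N : Matroid α} {C : Set α} {e : α} (hC : IsCircuit N C)
    (he : e ∈ C) : e ∈ N.closure (C \ {e}) := by
  have hI : N.Indep (C \ {e}) := hC.2.2 e he
  by_contra h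
  have hind : N.Indep (insert e (C \ {e})) := by
    rw [hI.insert_indep_iff_of_notMem (by simp)]
    exact ⟨hC.1 he, h⟩
  rw [insert_diff_singleton, insert_eq_of_mem he] at hind
  exact hC.2.1 hind

lemma IsCircuit.subset_closure_diff {N : Matroid α} {C : Set α} {e : α} (hC : IsCircuit N C)
    (he : e ∈ C) : C ⊆ N.closure (C \ {e}) := by
  intro f hf
  by_cases hfe : f = e
  · subst hfe; exact hC.mem_closure_diff hf
  · exact N.subset_closure (C \ {e}) (diff_subset.trans hC.1) ⟨hf, hfe⟩

lemma IsCircuit.rk_add_one {N : Matroid α} {C : Set α} (hfin : N.E.Finite)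
    (hC : IsCircuit N C) : rk N C + 1 = C.ncard := by
  obtain ⟨e, he⟩ := hC.nonempty
  have hbasis : N.IsBasis (C \ {e}) C :=
    (hC.2.2 e he).isBasis_of_subset_of_subset_closure diff_subset (hC.subset_closure_diff he)
  rw [rk_eq_ncard_of_basis hfin hbasis]
  exact Set.ncard_diff_singleton_add_one he (hfin.subset hC.1)

lemma exists_circuit {N : Matroid α} {X : Set α} (hfin : N.E.Finite) (hX : X ⊆ N.E)
    (hdep : ¬ N.Indep X) : ∃ C, C ⊆ X ∧ IsCircuit N C := by
  have hXfin : X.Finite := hfin.subset hX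
  set S : Set (Set α) := {C | C ⊆ X ∧ ¬ N.Indep C} with hS
  have hSfin : S.Finite := hXfin.finite_subsets.subset (fun C hC => hC.1)
  have hSne : S.Nonempty := ⟨X, Subset.rfl, hdep⟩
  obtain ⟨C, hCS, hmin⟩ := hSfin.exists_minimal hSne
  refine ⟨C, hCS.1, hCS.1.trans hX, hCS.2, fun y hy => ?_⟩
  by_contra hdy
  have h1 : C \ {y} ∈ S := ⟨diff_subset.trans hCS.1, hdy⟩
  have h2 : C = C \ {y} := Subset.antisymm (hmin h1 diff_subset) diff_subset
  have : y ∈ C \ {y} := h2 ▸ hy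
  exact this.2 rfl

lemma cyclicFlat_closure_circuit {N : Matroid α} {C : Set α} (hC : IsCircuit N C) :
    CyclicFlat N (N.closure C) := by
  refine ⟨flat_closure N C, fun e heF hcol => ?_⟩
  have hFE : N.closure C ⊆ N.E := N.closure_subset_ground C
  obtain ⟨f, hf⟩ := hC.nonempty
  have hF : N.closure C ⊆ N.closure (N.closure C \ {e}) := by
    have h1 : C ⊆ N.closure (C \ {e}) := by
      by_cases he : e ∈ C
      · exact hC.subset_closure_diff he
      · rw [diff_singleton_eq_self he]
        exact N.subset_closure C hC.1
    have h2 : N.closure C ⊆ N.closure (C \ {e}) :=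
      N.closure_subset_closure_of_subset_closure h1
    refine h2.trans (N.closure_subset_closure ?_)
    intro y hy
    exact ⟨N.subset_closure C hC.1 hy.1, hy.2⟩
  obtain ⟨B, hB⟩ := N.exists_isBasis (N.closure C \ {e}) (diff_subset.trans hFE)
  have hBF : N.IsBasis B (N.closure C) := by
    refine hB.indep.isBasis_of_subset_of_subset_closure (hB.subset.trans diff_subset) ?_
    have := hB.closure_eq_closure
    rwa [← this] at hF
  have heB := hcol.2 B hBF.isBase_restrict
  exact (hB.subset heB).2 rfl

lemma not_coloop_of_mem_circuit {N : Matroid α} {C P : Set α} {e : α} (hC : IsCircuit N C)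
    (hCP : C ⊆ P) (hP : P ⊆ N.E) (he : e ∈ C) : ¬ IsColoop (N ↾ P) e := by
  intro hcol
  have hPcl : P ⊆ N.closure (P \ {e}) := by
    intro f hf
    by_cases hfe : f = e
    · subst hfe
      exact N.closure_subset_closure (diff_subset_diff_left hCP) (hC.mem_closure_diff he)
    · exact N.subset_closure (P \ {e}) (diff_subset.trans hP) ⟨hf, hfe⟩
  obtain ⟨B, hB⟩ := N.exists_isBasis (P \ {e}) (diff_subset.trans hP)
  have hBP : N.IsBasis B P := by
    refine hB.indep.isBasis_of_subset_of_subset_closure (hB.subset.trans diff_subset) ?_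
    have := hB.closure_eq_closure
    rwa [← this] at hPcl
  have heB := hcol.2 B hBP.isBase_restrict
  exact (hB.subset heB).2 rfl

lemma exists_circuit_of_not_coloop {N : Matroid α} {P : Set α} {e : α} (hfin : N.E.Finite)
    (hP : P ⊆ N.E) (heP : e ∈ P) (h : ¬ IsColoop (N ↾ P) e) :
    ∃ C, IsCircuit N C ∧ e ∈ C ∧ C ⊆ P := by
  have h' : ¬ ∀ B, (N ↾ P).IsBase B → e ∈ B := by
    intro h'
    exact h ⟨by rwa [restrict_ground_eq], h'⟩
  push_neg at h'
  obtain ⟨B, hB, heB⟩ := h'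
  have hBP : N.IsBasis B P := (isBase_restrict_iff hP).mp hB
  have hecl : e ∈ N.closure B := hBP.subset_closure heP
  have hdep : ¬ N.Indep (insert e B) := by
    intro hind
    rw [hBP.indep.insert_indep_iff_of_notMem heB] at hind
    exact hind.2 hecl
  obtain ⟨C, hCsub, hC⟩ := exists_circuit hfin
    (insert_subset (hP heP) hBP.indep.subset_ground) hdep
  refine ⟨C, hC, ?_, ?_⟩
  · by_contra heC
    have hCB : C ⊆ B := fun y hy => ((hCsub hy).resolve_left (fun h => heC (h ▸ hy)))
    exact hC.2.1 (hBP.indep.subset hCB)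
  · exact hCsub.trans (insert_subset heP hBP.subset)

lemma exists_cyclicFlat_of_dep {N : Matroid α} {X : Set α} (hfin : N.E.Finite)
    (hX : X ⊆ N.E) (hdep : ¬ N.Indep X) :
    ∃ F, CyclicFlat N F ∧ rk N F < (X ∩ F).ncard := by
  obtain ⟨C, hCX, hC⟩ := exists_circuit hfin hX hdep
  refine ⟨N.closure C, cyclicFlat_closure_circuit hC, ?_⟩
  have hCF : C ⊆ X ∩ N.closure C := subset_inter hCX (N.subset_closure C hC.1)
  have h1 : C.ncard ≤ (X ∩ N.closure C).ncard :=
    Set.ncard_le_ncard hCF (hfin.subset (inter_subset_left.trans hX))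
  have h2 := hC.rk_add_one hfin
  rw [rk_closure_eq hfin hC.1]
  omega


/-- For `S' ⊆ E(Q)` with `a ∉ S'` and `|S' ∩ (T e ∪ {e})| = 1` for all `e ∈ p(S')`:
the tip lies in `cl_Q(S')` iff some `e ∈ p(S')` with `S' ∩ T e ≠ ∅` is not a
coloop of `M | p(S')`. -/
theorem tip_in_closure_iff_noncoloop {M Q : Matroid α} {T : α → Set α} {a : α} {m : ℕ}
    (hFC : FreeCone M Q T a m) (S' : Set α) (hS' : S' ⊆ Q.E) (haS' : a ∉ S')
    (hone : ∀ e ∈ proj M.E T S', (S' ∩ (T e ∪ {e})).ncard = 1) :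
    a ∈ Q.closure S' ↔
      ∃ e ∈ proj M.E T S', (S' ∩ T e).Nonempty ∧
        ¬ IsColoop (M ↾ proj M.E T S') e := by

  obtain ⟨hm, hMfin, hloopless, hTfin, hTcard, hTdisjE, hTdisj, ha, hQE, hcyclic,
    hrank1, hrank2⟩ := hFC
  have hQfin : Q.E.Finite := by
    rw [hQE]
    exact (hMfin.union (hMfin.biUnion hTfin)).union (finite_singleton a)
  have haM : a ∉ M.E := fun h => ha (Or.inl h)
  have haQ : a ∈ Q.E := by rw [hQE]; exact Or.inr rfl
  set P := proj M.E T S' with hPdef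
  have hPmem : ∀ e, e ∈ P ↔ (e ∈ S' ∧ e ∈ M.E) ∨ (e ∈ M.E ∧ (S' ∩ T e).Nonempty) := by
    intro e
    simp only [hPdef, proj, mem_union, mem_inter_iff, mem_setOf_eq]
  have hPE : P ⊆ M.E := by
    intro e he
    rcases (hPmem e).mp he with h | h
    · exact h.2
    · exact h.1
  have hone' : ∀ e, e ∈ P → ∃ y, S' ∩ (T e ∪ {e}) = {y} := fun e he =>
    Set.ncard_eq_one.mp (hone e he)
  choose! x hx using hone'
  have hxmem : ∀ e ∈ P, x e ∈ S' ∩ (T e ∪ {e}) := fun e he => by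
    rw [hx e he]; rfl
  have hxS : ∀ e ∈ P, x e ∈ S' := fun e he => (hxmem e he).1
  have hxfib : ∀ e ∈ P, x e ∈ T e ∪ {e} := fun e he => (hxmem e he).2
  have hxuniq : ∀ e ∈ P, ∀ y, y ∈ S' → y ∈ T e ∪ {e} → y = x e := by
    intro e he y hyS hyf
    have h : y ∈ S' ∩ (T e ∪ {e}) := ⟨hyS, hyf⟩
    rw [hx e he] at h
    exact h
  have hfibdisj : ∀ e ∈ M.E, ∀ f ∈ M.E, ∀ y, y ∈ T e ∪ {e} → y ∈ T f ∪ {f} → e = f := by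
    intro e he f hf y hy1 hy2
    by_contra hef
    rcases hy1 with h1 | h1 <;> rcases hy2 with h2 | h2
    · exact Set.disjoint_left.mp (hTdisj e he f hf hef) h1 h2
    · rw [mem_singleton_iff] at h2
      exact Set.disjoint_left.mp (hTdisjE e he) h1 (h2 ▸ hf)
    · rw [mem_singleton_iff] at h1
      exact Set.disjoint_left.mp (hTdisjE f hf) h2 (h1 ▸ he)
    · rw [mem_singleton_iff] at h1 h2
      exact hef (h1.symm.trans h2)
  have hxM : ∀ e ∈ P, x e ∈ M.E → x e = e := by
    intro e he hM
    rcases hxfib e he with h | h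
    · exact absurd hM (Set.disjoint_left.mp (hTdisjE e (hPE he)) h)
    · exact mem_singleton_iff.mp h
  have hxT : ∀ e ∈ P, (S' ∩ T e).Nonempty → x e ∈ T e := by
    rintro e he ⟨t, htS, htT⟩
    have h := hxuniq e he t htS (Or.inl htT)
    rwa [← h]
  have hxE' : ∀ e ∈ P, S' ∩ T e = ∅ → x e = e := by
    intro e he hemp
    rcases hxfib e he with h | h
    · have hmem2 : x e ∈ S' ∩ T e := ⟨hxS e he, h⟩
      rw [hemp] at hmem2
      exact absurd hmem2 (notMem_empty _)
    · exact mem_singleton_iff.mp h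
  have hxinj : ∀ A, A ⊆ P → Set.InjOn x A := by
    intro A hA e he f hf hef
    exact hfibdisj e (hPE (hA he)) f (hPE (hA hf)) (x e) (hxfib e (hA he))
      (by rw [hef]; exact hxfib f (hA hf))
  have hconeQ : ∀ F'', F'' ⊆ M.E → cone T a F'' ⊆ Q.E := by
    intro F'' hF'' y hy
    rw [hQE]
    rcases hy with (hy | hy) | hy
    · exact Or.inl (Or.inl (hF'' hy))
    · exact Or.inr hy
    · obtain ⟨e, he, hye⟩ := mem_iUnion₂.mp hy
      exact Or.inl (Or.inr (mem_biUnion (hF'' he) hye))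
  have hxcone : ∀ (F'' : Set α), ∀ e ∈ P, e ∈ F'' → x e ∈ cone T a F'' := by
    intro F'' e he heF
    rcases hxfib e he with h | h
    · exact Or.inr (mem_biUnion heF h)
    · rw [mem_singleton_iff] at h
      exact Or.inl (Or.inl (by rw [h]; exact heF))
  have hcone_mem : ∀ F'', F'' ⊆ M.E → ∀ A, A ⊆ P →
      (x '' A) ∩ cone T a F'' = x '' (A ∩ F'') := by
    intro F'' hF'' A hA
    ext y
    constructor
    · rintro ⟨⟨e, heA, rfl⟩, hyc⟩
      have heP := hA heA
      refine ⟨e, ⟨heA, ?_⟩, rfl⟩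
      rcases hyc with (hy | hy) | hy
      · rw [hxM e heP (hF'' hy)] at hy
        exact hy
      · rw [mem_singleton_iff] at hy
        exact absurd (hy ▸ hxS e heP) haS'
      · obtain ⟨f, hfF, hyf⟩ := mem_iUnion₂.mp hy
        have hef := hfibdisj e (hPE heP) f (hF'' hfF) (x e) (hxfib e heP) (Or.inl hyf)
        rw [hef]; exact hfF
    · rintro ⟨e, ⟨heA, heF⟩, rfl⟩
      exact ⟨⟨e, heA, rfl⟩, hxcone F'' e (hA heA) heF⟩
  have hScone : ∀ F'', F'' ⊆ M.E → S' ∩ cone T a F'' = x '' (P ∩ F'') := by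
    intro F'' hF''
    ext y
    constructor
    · rintro ⟨hyS, hyc⟩
      rcases hyc with (hy | hy) | hy
      · have hyP : y ∈ P := (hPmem y).mpr (Or.inl ⟨hyS, hF'' hy⟩)
        exact ⟨y, ⟨hyP, hy⟩, (hxuniq y hyP y hyS (Or.inr rfl)).symm⟩
      · rw [mem_singleton_iff] at hy
        exact absurd (hy ▸ hyS) haS'
      · obtain ⟨e, heF, hye⟩ := mem_iUnion₂.mp hy
        have heP : e ∈ P := (hPmem e).mpr (Or.inr ⟨hF'' heF, y, hyS, hye⟩)
        exact ⟨e, ⟨heP, heF⟩, (hxuniq e heP y hyS (Or.inl hye)).symm⟩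
    · rintro ⟨e, ⟨heP, heF⟩, rfl⟩
      exact ⟨hxS e heP, hxcone F'' e heP heF⟩
  constructor
  · -- forward direction
    intro hacl
    by_contra hcon
    push_neg at hcon
    obtain ⟨I, hI⟩ := Q.exists_isBasis S' hS'
    have haI : a ∉ I := fun h => haS' (hI.subset h)
    have hacl' : a ∈ Q.closure I := by rw [hI.closure_eq_closure]; exact hacl
    have hdepaI : ¬ Q.Indep (insert a I) := by
      intro hind
      rw [hI.indep.insert_indep_iff_of_notMem haI] at hind
      exact hind.2 hacl'
    obtain ⟨G, hGcf, hGlt⟩ := exists_cyclicFlat_of_dep hQfin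
      (insert_subset haQ hI.indep.subset_ground) hdepaI
    have haG : a ∈ G := by
      by_contra haG
      have heq : (insert a I) ∩ G = I ∩ G := by
        ext y
        constructor
        · rintro ⟨(rfl | hyI), hyG⟩
          · exact absurd hyG haG
          · exact ⟨hyI, hyG⟩
        · rintro ⟨hyI, hyG⟩
          exact ⟨Or.inr hyI, hyG⟩
      rw [heq] at hGlt
      have hle := ncard_le_rk hQfin (hI.indep.subset inter_subset_left)
        (inter_subset_right (s := I) (t := G))
      omega
    rcases (hcyclic G).mp hGcf with hGM | ⟨F', hF'flat, hF'ne, rfl⟩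
    · exact haM (hGM.1.subset_ground haG)
    have hF'E : F' ⊆ M.E := hF'flat.subset_ground
    rw [hrank2 F' hF'flat hF'ne] at hGlt
    have h1 : (insert a I) ∩ cone T a F' ⊆ insert a (I ∩ cone T a F') := by
      rintro y ⟨(rfl | hyI), hyc⟩
      · exact Or.inl rfl
      · exact Or.inr ⟨hyI, hyc⟩
    have hfin1 : (insert a (I ∩ cone T a F')).Finite :=
      (((hQfin.subset hI.indep.subset_ground).subset inter_subset_left).insert a)
    have h2 : ((insert a I) ∩ cone T a F').ncard ≤ (I ∩ cone T a F').ncard + 1 :=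
      le_trans (Set.ncard_le_ncard h1 hfin1) (Set.ncard_insert_le a _)
    have h4 : rk M F' + 1 ≤ rk Q (S' ∩ cone T a F') := by
      have h3 := ncard_le_rk hQfin (hI.indep.subset inter_subset_left)
        (inter_subset_inter_left (cone T a F') hI.subset)
      omega
    rw [hScone F' hF'E] at h4
    obtain ⟨J, hJind, hJsub, hJcard⟩ := exists_indep_rk hQfin (x '' (P ∩ F'))
    set B := {e ∈ P ∩ F' | x e ∈ J} with hBdef
    have hBsub : B ⊆ P ∩ F' := sep_subset _ _
    have hBP : B ⊆ P := hBsub.trans inter_subset_left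
    have hJB : J = x '' B := by
      ext y
      constructor
      · intro hy
        obtain ⟨e, heA, rfl⟩ := hJsub hy
        exact ⟨e, ⟨heA, hy⟩, rfl⟩
      · rintro ⟨e, ⟨heA, hyJ⟩, rfl⟩
        exact hyJ
    have hBcard : J.ncard = B.ncard := by
      rw [hJB]
      exact Set.ncard_image_of_injOn (hxinj B hBP)
    have hBindep : M.Indep B := by
      by_contra hdepB
      obtain ⟨C, hCB, hC⟩ := exists_circuit hMfin (hBP.trans hPE) hdepB
      have hxf : ∀ f ∈ C, x f = f := by
        intro f hf
        have hfP : f ∈ P := hBP (hCB hf)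
        have hnc := not_coloop_of_mem_circuit hC (hCB.trans hBP) hPE hf
        have hfe : S' ∩ T f = ∅ := by
          by_contra hne
          exact hnc (hcon f hfP (nonempty_iff_ne_empty.mpr hne))
        exact hxE' f hfP hfe
      have hCJ : C ⊆ J := by
        intro f hf
        have h := (hCB hf).2
        rwa [hxf f hf] at h
      have hcfM : CyclicFlat M (M.closure C) := cyclicFlat_closure_circuit hC
      have hle := ncard_le_rk hQfin (hJind.subset hCJ) (M.subset_closure C hC.1)
      rw [hrank1 _ hcfM, rk_closure_eq hMfin hC.1] at hle
      have hrkC := hC.rk_add_one hMfin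
      omega
    have hBle := ncard_le_rk hMfin hBindep (hBsub.trans inter_subset_right)
    omega
  · -- backward direction
    rintro ⟨e₀, he₀P, hT0, hnc⟩
    obtain ⟨C, hC, he₀C, hCP⟩ := exists_circuit_of_not_coloop hMfin hPE he₀P hnc
    have hCE := hC.1
    have hF'flat : M.IsFlat (M.closure C) := flat_closure M C
    have hCF' : C ⊆ M.closure C := M.subset_closure C hCE
    have hF'ne : (M.closure C).Nonempty := ⟨e₀, hCF' he₀C⟩
    have hrkF' : rk M (M.closure C) + 1 = C.ncard := by
      rw [rk_closure_eq hMfin hCE]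
      exact hC.rk_add_one hMfin
    have hCfin : C.Finite := hMfin.subset hCE
    have hWS : x '' C ⊆ S' := by
      rintro y ⟨e, he, rfl⟩
      exact hxS e (hCP he)
    have hWQ : x '' C ⊆ Q.E := hWS.trans hS'
    have hWcard : (x '' C).ncard = C.ncard := Set.ncard_image_of_injOn (hxinj C hCP)
    have hWfin : (x '' C).Finite := hQfin.subset hWQ
    have hWindep : Q.Indep (x '' C) := by
      by_contra hdep
      obtain ⟨G, hGcf, hGlt⟩ := exists_cyclicFlat_of_dep hQfin hWQ hdep
      rcases (hcyclic G).mp hGcf with hGM | ⟨F'', hF''flat, hF''ne, rfl⟩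
      · have hGE : G ⊆ M.E := hGM.1.subset_ground
        have hsub : (x '' C) ∩ G ⊆ (C \ {e₀}) ∩ G := by
          rintro y ⟨⟨e, heC, rfl⟩, hyG⟩
          have heP := hCP heC
          have hxe : x e = e := hxM e heP (hGE hyG)
          refine ⟨⟨by rw [hxe]; exact heC, ?_⟩, hyG⟩
          intro hmem
          rw [mem_singleton_iff] at hmem
          have he0 : e = e₀ := by rw [← hxe]; exact hmem
          subst he0
          have h1 := hxT e heP hT0
          rw [hxe] at h1
          exact Set.disjoint_left.mp (hTdisjE e (hPE heP)) h1 (hPE heP)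
        have hind : M.Indep ((C \ {e₀}) ∩ G) := (hC.2.2 e₀ he₀C).subset inter_subset_left
        have hle1 : ((x '' C) ∩ G).ncard ≤ ((C \ {e₀}) ∩ G).ncard :=
          Set.ncard_le_ncard hsub (hMfin.subset (inter_subset_right.trans hGE))
        have hle2 := ncard_le_rk hMfin hind (inter_subset_right (s := C \ {e₀}) (t := G))
        rw [hrank1 G hGM] at hGlt
        omega
      · have hF''E : F'' ⊆ M.E := hF''flat.subset_ground
        rw [hcone_mem F'' hF''E C hCP, hrank2 F'' hF''flat hF''ne] at hGlt
        have hcardeq : (x '' (C ∩ F'')).ncard = (C ∩ F'').ncard :=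
          Set.ncard_image_of_injOn ((hxinj C hCP).mono inter_subset_left)
        by_cases hCF'' : C ⊆ F''
        · have h5 : (C ∩ F'').ncard = C.ncard := by rw [inter_eq_left.mpr hCF'']
          have hle3 := ncard_le_rk hMfin (hC.2.2 e₀ he₀C) (diff_subset.trans hCF'')
          have hd : (C \ {e₀}).ncard + 1 = C.ncard :=
            Set.ncard_diff_singleton_add_one he₀C hCfin
          omega
        · obtain ⟨g, hgC, hgF⟩ := not_subset.mp hCF''
          have hsub2 : C ∩ F'' ⊆ C \ {g} := by
            rintro y ⟨hy1, hy2⟩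
            exact ⟨hy1, fun h => hgF (mem_singleton_iff.mp h ▸ hy2)⟩
          have hind := (hC.2.2 g hgC).subset hsub2
          have hle3 := ncard_le_rk hMfin hind (inter_subset_right (s := C) (t := F''))
          omega
    have hWcone : x '' C ⊆ cone T a (M.closure C) := by
      rintro y ⟨e, he, rfl⟩
      exact hxcone (M.closure C) e (hCP he) (hCF' he)
    have haW : a ∉ x '' C := fun h => haS' (hWS h)
    have hdep2 : ¬ Q.Indep (insert a (x '' C)) := by
      intro hind
      have hle := ncard_le_rk hQfin hind (insert_subset (Or.inl (Or.inr rfl)) hWcone)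
      rw [hrank2 _ hF'flat hF'ne] at hle
      rw [Set.ncard_insert_of_notMem haW hWfin] at hle
      omega
    have hmem : a ∈ Q.closure (x '' C) := by
      by_contra hcl
      exact hdep2 ((hWindep.insert_indep_iff_of_notMem haW).mpr ⟨haQ, hcl⟩)
    exact Q.closure_subset_closure hWS hmem
end ConePaper
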